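/- For every function u in the Sobolev space H¹(ℝ²), the L⁴ norm satisfies ‖u‖²_{L⁴(ℝ²)} ≤ 2 ‖u‖_{L²(ℝ²)} ‖∇u‖_{L²(ℝ²)}. -/

import Mathlib

open MeasureTheory

/-! Since `u²` is the integral of its derivative `2 u ∂u` from `-∞`, on almost every horizontal line
`u(x, y)² ≤ a(y) := 2 ∫ |u| ‖Du‖ (t, y) dt`, and likewise `u(x, y)² ≤ b(x)` on vertical lines.
Hence `u⁴(x, y) ≤ a(y) b(x)`, and by Fubini `∫ u⁴ ≤ ∫ a ∫ b = (2 ∫ |u| ‖Du‖)²`; Cauchy–Schwarz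
bounds `∫ |u| ‖Du‖` by `‖u‖₂ ‖Du‖₂`. -/

lemma le_integral_of_hasDerivAt_le {f f' h : ℝ → ℝ} (hf : Integrable f)
    (hderiv : ∀ t, HasDerivAt f (f' t) t) (hh : Integrable h) (h0 : 0 ≤ h)
    (hle : ∀ t, f' t ≤ h t) (x : ℝ) : f x ≤ ∫ t, h t := by
  refine le_of_forall_pos_le_add fun ε hε => ?_
  -- `{f ≥ ε}` has finite measure, so it cannot contain the half-line `(-∞, x]`
  obtain ⟨t, htx, hft⟩ : ∃ t ≤ x, f t < ε := by
    by_contra! hcon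
    have : volume (Set.Iic x) < ⊤ :=
      (measure_mono fun s hs => hcon s hs).trans_lt (hf.measure_ge_lt_top hε)
    simp [Real.volume_Iic] at this
  have hftc : f x - f t ≤ ∫ s in t..x, h s :=
    intervalIntegral.sub_le_integral_of_hasDeriv_right_of_le htx
      (fun s _ => (hderiv s).continuousAt.continuousWithinAt)
      (fun s _ => (hderiv s).hasDerivWithinAt) hh.integrableOn (fun s _ => hle s)
  have hset : ∫ s in t..x, h s ≤ ∫ s, h s := by
    rw [intervalIntegral.integral_of_le htx]
    exact setIntegral_le_integral hh (.of_forall h0)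
  linarith

lemma sq_le_two_integral_along_line {E : Type*} [NormedAddCommGroup E] [NormedSpace ℝ E]
    {u : E → ℝ} (hu : Differentiable ℝ u) {γ : ℝ → E} {v : E} (hγ : ∀ t, HasDerivAt γ v t)
    (hv : ‖v‖ ≤ 1) (h2 : Integrable fun t => u (γ t) ^ 2)
    (hH : Integrable fun t => |u (γ t)| * ‖fderiv ℝ u (γ t)‖) (x : ℝ) :
    u (γ x) ^ 2 ≤ 2 * ∫ t, |u (γ t)| * ‖fderiv ℝ u (γ t)‖ := by
  rw [← integral_const_mul]
  refine le_integral_of_hasDerivAt_le h2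
    (fun t => ((hu _).hasFDerivAt.comp_hasDerivAt t (hγ t)).pow 2) (hH.const_mul 2)
    (fun t => by positivity) (fun t => ?_) x
  have hv' : |fderiv ℝ u (γ t) v| ≤ ‖fderiv ℝ u (γ t)‖ := by
    simpa using (fderiv ℝ u (γ t)).le_opNorm_of_le hv
  calc _ = 2 * (u (γ t) * fderiv ℝ u (γ t) v) := by
        simp only [Function.comp_apply]; ring
    _ ≤ 2 * (|u (γ t)| * |fderiv ℝ u (γ t) v|) := by
        rw [← abs_mul]; exact mul_le_mul_of_nonneg_left (le_abs_self _) zero_le_two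
    _ ≤ 2 * (|u (γ t)| * ‖fderiv ℝ u (γ t)‖) := by gcongr

lemma ae_forall_sq_le_two_integral_horizontal {u : ℝ × ℝ → ℝ} (hu : Differentiable ℝ u)
    (h2 : Integrable fun p => u p ^ 2) (hH : Integrable fun p => |u p| * ‖fderiv ℝ u p‖) :
    ∀ᵐ y, ∀ x, u (x, y) ^ 2 ≤ 2 * ∫ t, |u (t, y)| * ‖fderiv ℝ u (t, y)‖ := by
  rw [Measure.volume_eq_prod] at h2 hH
  filter_upwards [h2.prod_left_ae, hH.prod_left_ae] with y h2y hHy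
  exact sq_le_two_integral_along_line hu
    (fun t => (hasDerivAt_id t).prodMk (hasDerivAt_const t y)) (by simp) h2y hHy

lemma ae_forall_sq_le_two_integral_vertical {u : ℝ × ℝ → ℝ} (hu : Differentiable ℝ u)
    (h2 : Integrable fun p => u p ^ 2) (hH : Integrable fun p => |u p| * ‖fderiv ℝ u p‖) :
    ∀ᵐ x, ∀ y, u (x, y) ^ 2 ≤ 2 * ∫ s, |u (x, s)| * ‖fderiv ℝ u (x, s)‖ := by
  rw [Measure.volume_eq_prod] at h2 hH
  filter_upwards [h2.prod_right_ae, hH.prod_right_ae] with x h2x hHx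
  exact sq_le_two_integral_along_line hu
    (fun s => (hasDerivAt_const s x).prodMk (hasDerivAt_id s)) (by simp) h2x hHx

lemma integral_pow_four_le_of_sq_le {α β : Type*} [MeasurableSpace α] [MeasurableSpace β]
    {μ : Measure α} {ν : Measure β} [SFinite μ] [SFinite ν] {w : α × β → ℝ} {a : α → ℝ}
    {b : β → ℝ} (ha : Integrable a μ) (hb : Integrable b ν)
    (hwa : ∀ᵐ x ∂μ, ∀ y, w (x, y) ^ 2 ≤ a x) (hwb : ∀ᵐ y ∂ν, ∀ x, w (x, y) ^ 2 ≤ b y) :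
    ∫ p, w p ^ 4 ∂μ.prod ν ≤ (∫ x, a x ∂μ) * ∫ y, b y ∂ν := by
  rw [← integral_prod_mul]
  refine integral_mono_of_nonneg (.of_forall fun p => by positivity) (ha.mul_prod hb) ?_
  filter_upwards [Measure.quasiMeasurePreserving_fst.ae hwa,
    Measure.quasiMeasurePreserving_snd.ae hwb] with p hpa hpb
  have hp1 : w p ^ 2 ≤ a p.1 := hpa p.2
  have hp2 : w p ^ 2 ≤ b p.2 := hpb p.1
  calc w p ^ 4 = w p ^ 2 * w p ^ 2 := by ring
    _ ≤ a p.1 * b p.2 := mul_le_mul hp1 hp2 (by positivity) ((sq_nonneg _).trans hp1)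

lemma integral_pow_four_le_sq_integral_abs_mul_norm_fderiv {u : ℝ × ℝ → ℝ}
    (hu : Differentiable ℝ u) (h2 : Integrable fun p => u p ^ 2)
    (hH : Integrable fun p => |u p| * ‖fderiv ℝ u p‖) :
    ∫ p, u p ^ 4 ≤ (2 * ∫ p, |u p| * ‖fderiv ℝ u p‖) ^ 2 := by
  have hH' := hH
  rw [Measure.volume_eq_prod] at hH' ⊢
  calc ∫ p, u p ^ 4 ∂(volume.prod volume)
      ≤ (∫ x, 2 * ∫ s, |u (x, s)| * ‖fderiv ℝ u (x, s)‖) *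
          ∫ y, 2 * ∫ t, |u (t, y)| * ‖fderiv ℝ u (t, y)‖ :=
        integral_pow_four_le_of_sq_le (hH'.integral_prod_left.const_mul 2)
          (hH'.integral_prod_right.const_mul 2) (ae_forall_sq_le_two_integral_vertical hu h2 hH)
          (ae_forall_sq_le_two_integral_horizontal hu h2 hH)
    _ = _ := by
        rw [integral_const_mul, integral_const_mul, integral_integral hH',
          ← integral_integral_swap hH', integral_integral hH']
        ring

lemma integral_mul_le_rpow_integral_sq_mul {α : Type*} [MeasurableSpace α] {μ : Measure α}
    {f g : α → ℝ} (hf0 : 0 ≤ᵐ[μ] f) (hg0 : 0 ≤ᵐ[μ] g) (hf : MemLp f 2 μ) (hg : MemLp g 2 μ) :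
    ∫ a, f a * g a ∂μ ≤ (∫ a, f a ^ 2 ∂μ) ^ (1 / 2 : ℝ) * (∫ a, g a ^ 2 ∂μ) ^ (1 / 2 : ℝ) := by
  have := integral_mul_le_Lp_mul_Lq_of_nonneg Real.HolderConjugate.two_two hf0 hg0
    (by rwa [ENNReal.ofReal_ofNat]) (by rwa [ENNReal.ofReal_ofNat])
  simpa only [Real.rpow_two] using this

theorem stmt_1_general (u : ℝ × ℝ → ℝ) (hu : ContDiff ℝ 1 u)
    (h2 : Integrable (fun p => (u p) ^ 2))
    (hg : Integrable (fun p => ‖fderiv ℝ u p‖ ^ 2)) :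
    (∫ p, (u p) ^ 4) ^ ((1 : ℝ) / 2) ≤
      2 * (∫ p, (u p) ^ 2) ^ ((1 : ℝ) / 2) *
        (∫ p, ‖fderiv ℝ u p‖ ^ 2) ^ ((1 : ℝ) / 2) := by
  have hu_L2 : MemLp (fun p => |u p|) 2 :=
    (memLp_two_iff_integrable_sq hu.continuous.abs.aestronglyMeasurable).2
      (by simpa only [sq_abs] using h2)
  have hDu_L2 : MemLp (fun p => ‖fderiv ℝ u p‖) 2 :=
    (memLp_two_iff_integrable_sq
      (hu.continuous_fderiv one_ne_zero).norm.aestronglyMeasurable).2 hg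
  have hCS := integral_mul_le_rpow_integral_sq_mul (.of_forall fun p => abs_nonneg (u p))
    (.of_forall fun p => norm_nonneg _) hu_L2 hDu_L2
  simp only [sq_abs] at hCS
  calc (∫ p, u p ^ 4) ^ (1 / 2 : ℝ)
      ≤ ((2 * ∫ p, |u p| * ‖fderiv ℝ u p‖) ^ 2) ^ (1 / 2 : ℝ) :=
        Real.rpow_le_rpow (integral_nonneg fun p => by positivity)
          (integral_pow_four_le_sq_integral_abs_mul_norm_fderiv (hu.differentiable one_ne_zero)
            h2 (hu_L2.integrable_mul hDu_L2)) (by norm_num)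
    _ = 2 * ∫ p, |u p| * ‖fderiv ℝ u p‖ := by
        rw [← Real.sqrt_eq_rpow, Real.sqrt_sq (by positivity)]
    _ ≤ _ := by rw [mul_assoc]; gcongr

/-- Ladyzhenskaya inequality on the plane:
`‖u‖²_{L⁴(ℝ²)} ≤ 2 ‖u‖_{L²(ℝ²)} ‖∇u‖_{L²(ℝ²)}`. -/
theorem stmt_1 (u : ℝ × ℝ → ℝ) (hu : ContDiff ℝ 1 u)
    (h2 : Integrable (fun p => (u p) ^ 2))
    (h4 : Integrable (fun p => (u p) ^ 4))
    (hg : Integrable (fun p => ‖fderiv ℝ u p‖ ^ 2)) :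
    (∫ p, (u p) ^ 4) ^ ((1 : ℝ) / 2) ≤
      2 * (∫ p, (u p) ^ 2) ^ ((1 : ℝ) / 2) *
        (∫ p, ‖fderiv ℝ u p‖ ^ 2) ^ ((1 : ℝ) / 2) :=
  stmt_1_general u hu h2 hg
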